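/- Let π = ((α^1, τ^1, a^1), …, (α^K, τ^K, a^K)) be a valid dynamic linear contract whose actions are consecutively decreasing, i.e., a^{k+1} = a^k − 1 for every 1 ≤ k ≤ K−1. Then there exists a valid free-fall dynamic linear contract π′ with Util(π′) ≥ Util(π). -/

import Mathlib

open Finset

/-- Indifference point `α_{i,i+1}` between actions `i` and `i+1`. -/
noncomputable def indiff (c R : ℕ → ℝ) (i : ℕ) : ℝ :=
  (c (i + 1) - c i) / (R (i + 1) - R i)

/-- Breakpoint `α_{i,i+1}` with the convention `α_{0,1} := 0`. -/
noncomputable def bp (c R : ℕ → ℝ) (i : ℕ) : ℝ :=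
  if i = 0 then 0 else indiff c R i

/-- A linear contract instance with `n ≥ 2` actions indexed `1,…,n`:
costs `0 = c_1 < … < c_n`, rewards `0 ≤ R_1 < … < R_n`, and indifference
points satisfying `0 < α_{1,2} < … < α_{n-1,n} ≤ 1`. -/
def LinInstance (n : ℕ) (c R : ℕ → ℝ) : Prop :=
  2 ≤ n ∧ c 1 = 0 ∧ 0 ≤ R 1 ∧
    (∀ i, 1 ≤ i → i < n → c i < c (i + 1)) ∧
    (∀ i, 1 ≤ i → i < n → R i < R (i + 1)) ∧
    0 < indiff c R 1 ∧
    (∀ i, 1 ≤ i → i + 1 ≤ n - 1 → indiff c R i < indiff c R (i + 1)) ∧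
    indiff c R (n - 1) ≤ 1

/-- Best-response set of the agent to the linear contract with scalar `x`. -/
def BR (n : ℕ) (c R : ℕ → ℝ) (x : ℝ) : Set ℕ :=
  {i | i ∈ Finset.Icc 1 n ∧ ∀ j ∈ Finset.Icc 1 n, x * R j - c j ≤ x * R i - c i}

/-- A dynamic linear contract with `K` segments (indexed `1,…,K`):
scalars `α`, durations `τ`, and actions `a`. -/
structure DLC where
  K : ℕ
  α : ℕ → ℝ
  τ : ℕ → ℝ
  a : ℕ → ℕ

namespace DLC

/-- Total duration of the first `k` segments. -/
noncomputable def Tsum (π : DLC) (k : ℕ) : ℝ := ∑ j ∈ Finset.Icc 1 k, π.τ j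

/-- Cumulative scalar contract of the first `k` segments. -/
noncomputable def Asum (π : DLC) (k : ℕ) : ℝ := ∑ j ∈ Finset.Icc 1 k, π.α j * π.τ j

/-- Time-averaged contract `ᾱ^k` after the first `k` segments. -/
noncomputable def avg (π : DLC) (k : ℕ) : ℝ := π.Asum k / π.Tsum k

/-- Validity: positive durations, nonnegative scalars, actions in `{1,…,n}`,
and each action is a best response to the historical average contract at the
end of its segment, and (for `k ≥ 2`) also at its beginning. -/
def Valid (n : ℕ) (c R : ℕ → ℝ) (π : DLC) : Prop :=
  1 ≤ π.K ∧
    (∀ k ∈ Finset.Icc 1 π.K, 0 ≤ π.α k ∧ 0 < π.τ k ∧ π.a k ∈ Finset.Icc 1 n) ∧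
    (∀ k ∈ Finset.Icc 1 π.K, π.a k ∈ BR n c R (π.avg k)) ∧
    (∀ k, 2 ≤ k → k ≤ π.K → π.a k ∈ BR n c R (π.avg (k - 1)))

/-- Time-averaged principal utility. -/
noncomputable def Util (R : ℕ → ℝ) (π : DLC) : ℝ :=
  (∑ k ∈ Finset.Icc 1 π.K, π.τ k * (1 - π.α k) * R (π.a k)) / π.Tsum π.K

/-- Time-averaged agent utility. -/
noncomputable def UtilA (c R : ℕ → ℝ) (π : DLC) : ℝ :=
  (∑ k ∈ Finset.Icc 1 π.K, π.τ k * (π.α k * R (π.a k) - c (π.a k))) / π.Tsum π.K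

/-- Free-fall: the zero contract is offered on every segment after the first. -/
def FreeFall (π : DLC) : Prop := ∀ k, 2 ≤ k → k ≤ π.K → π.α k = 0

/-- Cumulative principal utility `u_P^{(t)}(π)` up to time `t`. -/
noncomputable def cumUtil (R : ℕ → ℝ) (π : DLC) (t : ℝ) : ℝ :=
  ∑ k ∈ Finset.Icc 1 π.K,
    (min t (π.Tsum k) - min t (π.Tsum (k - 1))) * (1 - π.α k) * R (π.a k)

/-- Cumulative scalar contract `A^{(t)}` up to time `t`. -/
noncomputable def cumA (π : DLC) (t : ℝ) : ℝ :=
  ∑ k ∈ Finset.Icc 1 π.K, (min t (π.Tsum k) - min t (π.Tsum (k - 1))) * π.α k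

end DLC

/-!
For `k < K` both `a^k = a^{k+1} + 1` and `a^{k+1}` are best responses to `ᾱ^k`, which pins
`ᾱ^k` to the indifference point `α_{a^{k+1}, a^{k+1}+1}`; hence the averages strictly decrease
and lie in `(0, 1]`. Let `A = A_K` be the total payment. The free-fall contract paying `A` at
once with average `ᾱ^1`, and then timed so that its running averages are again the `ᾱ^k`, is
valid with the same actions and the same total time. Summation by parts writes the utility as
`∑_{k<K} D_k (R_{a^k} - R_{a^{k+1}}) + D_K R_{a^K}`, where `D_k = T_k - A_k` is the principal's
retained time; the free fall retains `A/ᾱ^k - A ≥ T_k (1 - ᾱ^k)` because `A_k ≤ A`, with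
equality at `k = K`. When `ᾱ^K = ᾱ^{K-1}` this construction degenerates, but then
`α^K = ᾱ^{K-1}` and `a^K` has the lowest reward, so the last segment can first be dropped.
-/

namespace LinInstance

variable {n : ℕ} {c R : ℕ → ℝ}

lemma R_lt_R_succ (h : LinInstance n c R) {i : ℕ} (hi : 1 ≤ i) (hin : i + 1 ≤ n) :
    R i < R (i + 1) :=
  h.2.2.2.2.1 i hi hin

lemma indiff_monotoneOn (h : LinInstance n c R) :
    MonotoneOn (indiff c R) (Set.Icc 1 (n - 1)) :=
  monotoneOn_of_le_add_one Set.ordConnected_Icc fun i _ hi hi' =>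
    (h.2.2.2.2.2.2.1 i hi.1 hi'.2).le

lemma indiff_pos (h : LinInstance n c R) {i : ℕ} (hi : 1 ≤ i) (hin : i + 1 ≤ n) :
    0 < indiff c R i :=
  h.2.2.2.2.2.1.trans_le (h.indiff_monotoneOn ⟨le_rfl, by omega⟩ ⟨hi, by omega⟩ hi)

lemma indiff_le_one (h : LinInstance n c R) {i : ℕ} (hi : 1 ≤ i) (hin : i + 1 ≤ n) :
    indiff c R i ≤ 1 :=
  (h.indiff_monotoneOn ⟨hi, by omega⟩ ⟨by omega, le_rfl⟩ (by omega)).trans h.2.2.2.2.2.2.2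

end LinInstance

section BestResponse

variable {n : ℕ} {c R : ℕ → ℝ} {x : ℝ} {i : ℕ}

lemma eq_indiff_of_mem_BR (hR : R i < R (i + 1)) (hi : i ∈ BR n c R x)
    (hi' : i + 1 ∈ BR n c R x) : x = indiff c R i := by
  have h₁ := hi.2 (i + 1) hi'.1
  have h₂ := hi'.2 i hi.1
  rw [indiff, eq_div_iff (sub_pos.2 hR).ne']
  linarith

lemma le_indiff_of_mem_BR (hR : R i < R (i + 1)) (hin : i + 1 ≤ n) (hi : i ∈ BR n c R x) :
    x ≤ indiff c R i := by
  have := hi.2 (i + 1) (mem_Icc.2 ⟨by omega, hin⟩)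
  rw [indiff, le_div_iff₀ (sub_pos.2 hR)]
  linarith

end BestResponse

section SummationByParts

variable {S S' r : ℕ → ℝ} {m : ℕ}

lemma sum_Icc_by_parts (S r : ℕ → ℝ) (hS : S 0 = 0) (m : ℕ) :
    ∑ k ∈ Icc 1 (m + 1), (S k - S (k - 1)) * r k
      = ∑ k ∈ Icc 1 m, S k * (r k - r (k + 1)) + S (m + 1) * r (m + 1) := by
  induction m with
  | zero => simp [hS]
  | succ m ih =>
    rw [sum_Icc_succ_top (by omega), ih, sum_Icc_succ_top (by omega)]
    simp only [Nat.add_sub_cancel]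
    ring

lemma sum_Icc_sub_mul_le_of_le (hS : S 0 = 0) (hS' : S' 0 = 0)
    (hr : ∀ k ∈ Icc 1 m, r (k + 1) ≤ r k) (hle : ∀ k ∈ Icc 1 m, S k ≤ S' k)
    (htop : S (m + 1) = S' (m + 1)) :
    ∑ k ∈ Icc 1 (m + 1), (S k - S (k - 1)) * r k
      ≤ ∑ k ∈ Icc 1 (m + 1), (S' k - S' (k - 1)) * r k := by
  rw [sum_Icc_by_parts S r hS, sum_Icc_by_parts S' r hS', htop]
  gcongr with k hk
  · exact sub_nonneg.2 (hr k hk)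
  · exact hle k hk

lemma mul_le_sum_Icc_sub_mul (hS : S 0 = 0) (hr : ∀ k ∈ Icc 1 m, r (k + 1) ≤ r k)
    (hnonneg : ∀ k ∈ Icc 1 m, 0 ≤ S k) :
    S (m + 1) * r (m + 1) ≤ ∑ k ∈ Icc 1 (m + 1), (S k - S (k - 1)) * r k := by
  rw [sum_Icc_by_parts S r hS]
  have := sum_nonneg fun k hk => mul_nonneg (hnonneg k hk) (sub_nonneg.2 (hr k hk))
  linarith

end SummationByParts

namespace DLC

variable {n : ℕ} {c R : ℕ → ℝ} {π : DLC} {k : ℕ}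

def StepsDown (π : DLC) : Prop :=
  ∀ k, 1 ≤ k → k < π.K → (π.a (k + 1) : ℤ) = (π.a k : ℤ) - 1

def take (π : DLC) (m : ℕ) : DLC := { π with K := m }

lemma Tsum_zero (π : DLC) : π.Tsum 0 = 0 := by simp [Tsum]

lemma Asum_zero (π : DLC) : π.Asum 0 = 0 := by simp [Asum]

lemma Tsum_of_pos (π : DLC) (hk : 1 ≤ k) : π.Tsum k = π.Tsum (k - 1) + π.τ k := by
  obtain ⟨_, rfl⟩ := Nat.exists_eq_add_of_le' hk
  simp [Tsum, sum_Icc_succ_top]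

lemma Asum_of_pos (π : DLC) (hk : 1 ≤ k) : π.Asum k = π.Asum (k - 1) + π.α k * π.τ k := by
  obtain ⟨_, rfl⟩ := Nat.exists_eq_add_of_le' hk
  simp [Asum, sum_Icc_succ_top]

lemma sum_τ_mul_eq_sum_retained (π : DLC) (R : ℕ → ℝ) (m : ℕ) :
    ∑ k ∈ Icc 1 m, π.τ k * (1 - π.α k) * R (π.a k)
      = ∑ k ∈ Icc 1 m,
          ((π.Tsum k - π.Asum k) - (π.Tsum (k - 1) - π.Asum (k - 1))) * R (π.a k) := by
  refine sum_congr rfl fun k hk => ?_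
  rw [π.Tsum_of_pos (mem_Icc.1 hk).1, π.Asum_of_pos (mem_Icc.1 hk).1]
  ring

lemma Util_le_Util_of_retained_le {σ σ' : DLC} (hK : σ'.K = σ.K) (ha : σ'.a = σ.a)
    (hK₁ : 1 ≤ σ.K) (hr : ∀ k, 1 ≤ k → k < σ.K → R (σ.a (k + 1)) ≤ R (σ.a k))
    (hle : ∀ k, 1 ≤ k → k < σ.K → σ.Tsum k - σ.Asum k ≤ σ'.Tsum k - σ'.Asum k)
    (hT : σ'.Tsum σ.K = σ.Tsum σ.K) (hA : σ'.Asum σ.K = σ.Asum σ.K)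
    (hpos : 0 < σ.Tsum σ.K) :
    σ.Util R ≤ σ'.Util R := by
  obtain ⟨m, hm⟩ : ∃ m, σ.K = m + 1 := ⟨σ.K - 1, by omega⟩
  rw [Util, Util, hK, hT, sum_τ_mul_eq_sum_retained σ, sum_τ_mul_eq_sum_retained σ', ha]
  refine div_le_div_of_nonneg_right ?_ hpos.le
  rw [hm] at hr hle hT hA ⊢
  refine sum_Icc_sub_mul_le_of_le (r := fun k => R (σ.a k)) (by simp [Tsum_zero, Asum_zero])
    (by simp [Tsum_zero, Asum_zero]) (fun k hk => hr k (mem_Icc.1 hk).1 (by grind))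
    (fun k hk => hle k (mem_Icc.1 hk).1 (by grind)) (by rw [hT, hA])

namespace Valid

variable (hπ : π.Valid n c R)
include hπ

lemma τ_pos (hk : 1 ≤ k) (hkK : k ≤ π.K) : 0 < π.τ k :=
  (hπ.2.1 k (mem_Icc.2 ⟨hk, hkK⟩)).2.1

lemma a_mem (hk : 1 ≤ k) (hkK : k ≤ π.K) : π.a k ∈ Icc 1 n :=
  (hπ.2.1 k (mem_Icc.2 ⟨hk, hkK⟩)).2.2

lemma Tsum_pos (hk : 1 ≤ k) (hkK : k ≤ π.K) : 0 < π.Tsum k :=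
  sum_pos (fun _ hj => hπ.τ_pos (mem_Icc.1 hj).1 ((mem_Icc.1 hj).2.trans hkK))
    ⟨1, mem_Icc.2 ⟨le_rfl, hk⟩⟩

lemma Asum_mono {l : ℕ} (hkl : k ≤ l) (hlK : l ≤ π.K) : π.Asum k ≤ π.Asum l :=
  sum_le_sum_of_subset_of_nonneg (Icc_subset_Icc_right hkl) fun j hj _ =>
    have hjK : j ≤ π.K := (mem_Icc.1 hj).2.trans hlK
    mul_nonneg (hπ.2.1 j (mem_Icc.2 ⟨(mem_Icc.1 hj).1, hjK⟩)).1
      (hπ.τ_pos (mem_Icc.1 hj).1 hjK).le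

lemma Asum_eq_avg_mul_Tsum (hk : 1 ≤ k) (hkK : k ≤ π.K) : π.Asum k = π.avg k * π.Tsum k :=
  (div_mul_cancel₀ _ (hπ.Tsum_pos hk hkK).ne').symm

lemma α_eq_avg_of_avg_eq (hk : 2 ≤ k) (hkK : k ≤ π.K) (heq : π.avg k = π.avg (k - 1)) :
    π.α k = π.avg k := by
  have hA := hπ.Asum_eq_avg_mul_Tsum (k := k) (by omega) hkK
  have hA' := hπ.Asum_eq_avg_mul_Tsum (k := k - 1) (by omega) (by omega)
  have hτ := hπ.τ_pos (k := k) (by omega) hkK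
  rw [π.Asum_of_pos (by omega), π.Tsum_of_pos (by omega), hA', heq] at hA
  rw [heq]
  exact mul_right_cancel₀ hτ.ne' (by linarith)

lemma take {m : ℕ} (hm : 1 ≤ m) (hmK : m ≤ π.K) : (π.take m).Valid n c R :=
  ⟨hm, fun k hk => hπ.2.1 k (mem_Icc.2 ⟨(mem_Icc.1 hk).1, (mem_Icc.1 hk).2.trans hmK⟩),
    fun k hk => hπ.2.2.1 k (mem_Icc.2 ⟨(mem_Icc.1 hk).1, (mem_Icc.1 hk).2.trans hmK⟩),
    fun k hk hkm => hπ.2.2.2 k hk (hkm.trans hmK)⟩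

lemma of_avg_eq {σ : DLC} (hK : σ.K = π.K) (ha : σ.a = π.a)
    (hα : ∀ k ∈ Icc 1 σ.K, 0 ≤ σ.α k) (hτ : ∀ k ∈ Icc 1 σ.K, 0 < σ.τ k)
    (havg : ∀ k ∈ Icc 1 σ.K, σ.avg k = π.avg k) : σ.Valid n c R := by
  refine ⟨hK ▸ hπ.1, fun k hk => ⟨hα k hk, hτ k hk, ha ▸ (hπ.2.1 k (hK ▸ hk)).2.2⟩,
    fun k hk => ?_, fun k hk hkK => ?_⟩
  · rw [havg k hk, ha]
    exact hπ.2.2.1 k (hK ▸ hk)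
  · rw [havg (k - 1) (mem_Icc.2 ⟨by omega, by omega⟩), ha]
    exact hπ.2.2.2 k hk (hK ▸ hkK)

end Valid

lemma StepsDown.take (hdec : π.StepsDown) (m : ℕ) (hmK : m ≤ π.K) : (π.take m).StepsDown :=
  fun k hk hkm => hdec k hk (hkm.trans_le hmK)

lemma StepsDown.a_eq_succ (hdec : π.StepsDown) (hk : 1 ≤ k) (hkK : k < π.K) :
    π.a k = π.a (k + 1) + 1 := by
  have := hdec k hk hkK
  omega

lemma StepsDown.a_succ_add_one_le (hdec : π.StepsDown) (hπ : π.Valid n c R) (hk : 1 ≤ k)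
    (hkK : k < π.K) : π.a (k + 1) + 1 ≤ n :=
  hdec.a_eq_succ hk hkK ▸ (mem_Icc.1 (hπ.a_mem hk hkK.le)).2

/-- The durations telescope to `Tsum k = C / β k`, while `Asum k = C`, so that the running
averages are the `β k`. -/
noncomputable def freeFallOf (K : ℕ) (a : ℕ → ℕ) (β : ℕ → ℝ) (C : ℝ) : DLC where
  K := K
  α k := if k = 1 then β 1 else 0
  τ k := if k = 1 then C / β 1 else C / β k - C / β (k - 1)
  a := a

section freeFallOf

variable {K : ℕ} {a : ℕ → ℕ} {β : ℕ → ℝ} {C : ℝ}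

lemma freeFall_freeFallOf : (freeFallOf K a β C).FreeFall :=
  fun _ hk _ => if_neg (by omega)

lemma Tsum_freeFallOf (hk : 1 ≤ k) : (freeFallOf K a β C).Tsum k = C / β k := by
  induction k, hk using Nat.le_induction with
  | base => simp [Tsum, freeFallOf]
  | succ k hk ih =>
    rw [Tsum_of_pos _ (by omega), Nat.add_sub_cancel, ih]
    simp [freeFallOf, show k ≠ 0 by omega]

lemma Asum_freeFallOf (hβ : β 1 ≠ 0) (hk : 1 ≤ k) : (freeFallOf K a β C).Asum k = C := by
  rw [Asum, sum_eq_single_of_mem 1 (mem_Icc.2 ⟨le_rfl, hk⟩) fun j _ hj => by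
    simp [freeFallOf, hj]]
  simp [freeFallOf, mul_div_cancel₀ _ hβ]

lemma avg_freeFallOf (hC : C ≠ 0) (hβ : β 1 ≠ 0) (hk : 1 ≤ k) :
    (freeFallOf K a β C).avg k = β k := by
  rw [avg, Asum_freeFallOf hβ hk, Tsum_freeFallOf hk, div_div_cancel₀ hC]

lemma τ_freeFallOf_pos (hC : 0 < C) (hβ : ∀ k ∈ Icc 1 K, 0 < β k)
    (hanti : ∀ k, 2 ≤ k → k ≤ K → β k < β (k - 1)) (hk : k ∈ Icc 1 K) :
    0 < (freeFallOf K a β C).τ k := by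
  obtain ⟨hk₁, hkK⟩ := mem_Icc.1 hk
  by_cases hk1 : k = 1
  · simpa [freeFallOf, hk1] using div_pos hC (hβ 1 (hk1 ▸ hk))
  · simpa [freeFallOf, hk1] using
      div_lt_div_of_pos_left hC (hβ k hk) (hanti k (by omega) hkK)

end freeFallOf

section StepsDown

variable (hI : LinInstance n c R) (hπ : π.Valid n c R) (hdec : π.StepsDown)
include hI hπ hdec

lemma R_a_succ_lt (hk : 1 ≤ k) (hkK : k < π.K) : R (π.a (k + 1)) < R (π.a k) :=
  hdec.a_eq_succ hk hkK ▸ hI.R_lt_R_succ (mem_Icc.1 (hπ.a_mem (by omega) hkK)).1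
    (hdec.a_succ_add_one_le hπ hk hkK)

lemma avg_eq_indiff (hk : 1 ≤ k) (hkK : k < π.K) : π.avg k = indiff c R (π.a (k + 1)) := by
  have hnext : π.a (k + 1) ∈ BR n c R (π.avg k) := hπ.2.2.2 (k + 1) (by omega) hkK
  have hcur : π.a (k + 1) + 1 ∈ BR n c R (π.avg k) :=
    hdec.a_eq_succ hk hkK ▸ hπ.2.2.1 k (mem_Icc.2 ⟨hk, hkK.le⟩)
  exact eq_indiff_of_mem_BR (hdec.a_eq_succ hk hkK ▸ R_a_succ_lt hI hπ hdec hk hkK) hnext hcur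

lemma avg_pos (hk : 1 ≤ k) (hkK : k < π.K) : 0 < π.avg k := by
  rw [avg_eq_indiff hI hπ hdec hk hkK]
  exact hI.indiff_pos (mem_Icc.1 (hπ.a_mem (by omega) hkK)).1 (hdec.a_succ_add_one_le hπ hk hkK)

lemma avg_le_one (hk : 1 ≤ k) (hkK : k < π.K) : π.avg k ≤ 1 := by
  rw [avg_eq_indiff hI hπ hdec hk hkK]
  exact hI.indiff_le_one (mem_Icc.1 (hπ.a_mem (by omega) hkK)).1
    (hdec.a_succ_add_one_le hπ hk hkK)

lemma Asum_le_Tsum (hk : 1 ≤ k) (hkK : k < π.K) : π.Asum k ≤ π.Tsum k := by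
  rw [hπ.Asum_eq_avg_mul_Tsum hk hkK.le]
  exact mul_le_of_le_one_left (hπ.Tsum_pos hk hkK.le).le (avg_le_one hI hπ hdec hk hkK)

lemma Asum_pos (hK : 2 ≤ π.K) (hk : 1 ≤ k) (hkK : k ≤ π.K) : 0 < π.Asum k :=
  calc 0 < π.avg 1 * π.Tsum 1 :=
        mul_pos (avg_pos hI hπ hdec le_rfl (by omega)) (hπ.Tsum_pos le_rfl (by omega))
    _ = π.Asum 1 := (hπ.Asum_eq_avg_mul_Tsum le_rfl (by omega)).symm
    _ ≤ π.Asum k := hπ.Asum_mono hk hkK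

lemma Tsum_sub_Asum_le (hk : 1 ≤ k) (hkK : k < π.K) :
    π.Tsum k - π.Asum k ≤ π.Asum π.K / π.avg k - π.Asum π.K := by
  have hβ := avg_pos hI hπ hdec hk hkK
  have hβ₁ := avg_le_one hI hπ hdec hk hkK
  have hA := hπ.Asum_eq_avg_mul_Tsum hk hkK.le
  have hAK := hπ.Asum_mono hkK.le le_rfl
  rw [le_sub_iff_add_le, le_div_iff₀ hβ]
  nlinarith [mul_nonneg (sub_nonneg.2 hAK) (sub_nonneg.2 hβ₁)]

lemma avg_succ_lt (hk : 1 ≤ k) (hkK : k + 1 < π.K) : π.avg (k + 1) < π.avg k := by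
  have hstep := hdec.a_eq_succ (k := k + 1) (by omega) hkK
  have hle := hdec.a_succ_add_one_le hπ hk (by omega)
  rw [avg_eq_indiff hI hπ hdec hk (by omega), avg_eq_indiff hI hπ hdec (by omega) hkK, hstep]
  exact hI.2.2.2.2.2.2.1 _ (mem_Icc.1 (hπ.a_mem (by omega) hkK)).1 (by omega)

lemma avg_last_le (hK : 2 ≤ π.K) : π.avg π.K ≤ π.avg (π.K - 1) := by
  obtain ⟨m, hm⟩ : ∃ m, π.K = m + 1 := ⟨π.K - 1, by omega⟩
  have hlast : π.a π.K ∈ BR n c R (π.avg π.K) :=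
    hπ.2.2.1 π.K (mem_Icc.2 ⟨by omega, le_rfl⟩)
  rw [hm] at hlast ⊢
  rw [Nat.add_sub_cancel, avg_eq_indiff hI hπ hdec (k := m) (by omega) (by omega)]
  exact le_indiff_of_mem_BR
    (hdec.a_eq_succ (k := m) (by omega) (by omega) ▸
      R_a_succ_lt hI hπ hdec (by omega) (by omega))
    (hdec.a_succ_add_one_le hπ (by omega) (by omega)) hlast

end StepsDown


section StepsDown

variable (hI : LinInstance n c R) (hπ : π.Valid n c R) (hdec : π.StepsDown)
include hI hπ hdec

theorem exists_freeFall_util_ge (hK : 2 ≤ π.K) (hlast : π.avg π.K < π.avg (π.K - 1)) :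
    ∃ π' : DLC, π'.Valid n c R ∧ π'.FreeFall ∧ π.Util R ≤ π'.Util R := by
  set C := π.Asum π.K
  have hC : 0 < C := Asum_pos hI hπ hdec hK (by omega) le_rfl
  have hβ : ∀ k ∈ Icc 1 π.K, 0 < π.avg k := fun k hk =>
    div_pos (Asum_pos hI hπ hdec hK (mem_Icc.1 hk).1 (mem_Icc.1 hk).2)
      (hπ.Tsum_pos (mem_Icc.1 hk).1 (mem_Icc.1 hk).2)
  have hanti : ∀ k, 2 ≤ k → k ≤ π.K → π.avg k < π.avg (k - 1) := by
    intro k hk hkK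
    rcases hkK.lt_or_eq with hlt | rfl
    · obtain ⟨j, rfl⟩ : ∃ j, k = j + 1 := ⟨k - 1, by omega⟩
      simpa using avg_succ_lt hI hπ hdec (k := j) (by omega) hlt
    · exact hlast
  set π' := freeFallOf π.K π.a π.avg C
  have hβ₁ : 0 < π.avg 1 := hβ 1 (mem_Icc.2 ⟨le_rfl, by omega⟩)
  have hvalid : π'.Valid n c R :=
    hπ.of_avg_eq rfl rfl (fun _ _ => ite_nonneg hβ₁.le le_rfl)
      (fun _ hk => τ_freeFallOf_pos hC hβ hanti hk)
      fun k hk => avg_freeFallOf hC.ne' hβ₁.ne' (mem_Icc.1 hk).1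
  have hT : π'.Tsum π.K = π.Tsum π.K := by
    rw [Tsum_freeFallOf (by omega), avg, div_div_cancel₀ hC.ne']
  refine ⟨π', hvalid, freeFall_freeFallOf, Util_le_Util_of_retained_le rfl rfl (by omega)
    (fun k hk hkK => (R_a_succ_lt hI hπ hdec hk hkK).le) (fun k hk hkK => ?_) hT
    (Asum_freeFallOf hβ₁.ne' (by omega)) (hπ.Tsum_pos (by omega) le_rfl)⟩
  rw [Tsum_freeFallOf hk, Asum_freeFallOf hβ₁.ne' hk]
  exact Tsum_sub_Asum_le hI hπ hdec hk hkK

theorem Util_le_Util_take (hK : 2 ≤ π.K) (heq : π.avg π.K = π.avg (π.K - 1)) :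
    π.Util R ≤ (π.take (π.K - 1)).Util R := by
  obtain ⟨m, hm⟩ : ∃ m, π.K = m + 1 + 1 := ⟨π.K - 2, by omega⟩
  set N := ∑ k ∈ Icc 1 (m + 1), π.τ k * (1 - π.α k) * R (π.a k) with hN_def
  have hT := hπ.Tsum_pos (k := m + 1) (by omega) (by omega)
  have hτ := hπ.τ_pos (k := m + 1 + 1) (by omega) (by omega)
  have hA := hπ.Asum_eq_avg_mul_Tsum (k := m + 1) (by omega) (by omega)
  have hα : π.α (m + 1 + 1) = π.avg (m + 1) := by
    rw [hm, Nat.add_sub_cancel] at heq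
    rw [hπ.α_eq_avg_of_avg_eq (by omega) (by omega) heq, heq]
  have hr := R_a_succ_lt hI hπ hdec (k := m + 1) (by omega) (by omega)
  have hretained_nonneg : ∀ k ∈ Icc 1 (m + 1), 0 ≤ π.Tsum k - π.Asum k := fun k hk =>
    sub_nonneg.2 (Asum_le_Tsum hI hπ hdec (mem_Icc.1 hk).1 (by grind))
  have hN : (π.Tsum (m + 1) - π.Asum (m + 1)) * R (π.a (m + 1 + 1)) ≤ N :=
    calc _ ≤ (π.Tsum (m + 1) - π.Asum (m + 1)) * R (π.a (m + 1)) :=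
          mul_le_mul_of_nonneg_left hr.le (hretained_nonneg _ (mem_Icc.2 ⟨by omega, le_rfl⟩))
      _ ≤ N := by
          rw [hN_def, sum_τ_mul_eq_sum_retained]
          exact mul_le_sum_Icc_sub_mul (r := fun k => R (π.a k)) (by simp [Tsum_zero, Asum_zero])
            (fun k hk => (R_a_succ_lt hI hπ hdec (mem_Icc.1 hk).1 (by grind)).le)
            fun k hk => hretained_nonneg k (by grind)
  have htake : (π.take (π.K - 1)).Util R = N / π.Tsum (m + 1) := by
    rw [hm]; rfl
  -- `π.Util R` is the mediant of `N / T_{K-1}` and `(1 - ᾱ^{K-1}) R_{a^K}`, and `hN` says that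
  -- the latter is the smaller one.
  rw [htake, Util, hm, sum_Icc_succ_top (by omega), ← hN_def, π.Tsum_of_pos (by omega),
    Nat.add_sub_cancel, hα, div_le_div_iff₀ (by positivity) hT]
  rw [hA] at hN
  nlinarith [mul_le_mul_of_nonneg_left hN hτ.le]

theorem exists_util_ge_and_avg_last_lt :
    ∃ σ : DLC, σ.Valid n c R ∧ σ.StepsDown ∧
      (2 ≤ σ.K → σ.avg σ.K < σ.avg (σ.K - 1)) ∧ π.Util R ≤ σ.Util R := by
  by_cases hstrict : 2 ≤ π.K → π.avg π.K < π.avg (π.K - 1)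
  · exact ⟨π, hπ, hdec, hstrict, le_rfl⟩
  obtain ⟨hK, hle⟩ := Classical.not_imp.1 hstrict
  have heq := le_antisymm (avg_last_le hI hπ hdec hK) (not_lt.1 hle)
  refine ⟨π.take (π.K - 1), hπ.take (by omega) (by omega), hdec.take _ (by omega),
    fun hK' => ?_, Util_le_Util_take hI hπ hdec hK heq⟩
  change 2 ≤ π.K - 1 at hK'
  change π.avg (π.K - 1) < π.avg (π.K - 1 - 1)
  obtain ⟨j, hj⟩ : ∃ j, π.K = j + 1 + 1 + 1 := ⟨π.K - 3, by omega⟩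
  rw [hj]
  exact avg_succ_lt hI hπ hdec (k := j + 1) (by omega) (by omega)

end StepsDown

end DLC

/-- Any valid dynamic linear contract whose actions are
consecutively decreasing is dominated by a valid free-fall linear contract. -/
theorem decreasing_to_free_fall (n : ℕ) (c R : ℕ → ℝ) (hInst : LinInstance n c R)
    (π : DLC) (hπ : π.Valid n c R)
    (hdec : ∀ k, 1 ≤ k → k < π.K → (π.a (k + 1) : ℤ) = (π.a k : ℤ) - 1) :
    ∃ π' : DLC, π'.Valid n c R ∧ π'.FreeFall ∧ π'.Util R ≥ π.Util R := by
  obtain ⟨σ, hσ, hσdec, hσlast, hle⟩ := DLC.exists_util_ge_and_avg_last_lt hInst hπ hdec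
  rcases lt_or_ge σ.K 2 with hK | hK
  · exact ⟨σ, hσ, fun k hk hkK => absurd (hk.trans hkK) (by omega), hle⟩
  · obtain ⟨π', hπ', hff, hge⟩ :=
      DLC.exists_freeFall_util_ge hInst hσ hσdec hK (hσlast hK)
    exact ⟨π', hπ', hff, hle.trans hge⟩
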